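/- Let ψ : [0,T] × ℝⁿ → ℝ be C¹, let x : [0,T] → ℝⁿ be differentiable at t with ψ(t, x(t)) = 0 and ψ(s, x(s)) ≤ 0 for all s in a neighborhood of t (in [0,T], with t interior). Suppose ẋ(t) = f − ξ∇ₓψ(t,x(t)) − w, where ξ ≥ 0, ⟨∇ₓψ(t,x(t)), w⟩ ≥ 0, |⟨∇ₓψ(t,x(t)), f⟩| + |∂_tψ(t,x(t))| ≤ μ₀, and |∇ₓψ(t,x(t))| ≥ η > 0. Then ξ ≤ μ₀/η². -/

import Mathlib

open RealInnerProductSpace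

/-! Along the trajectory, `s ↦ ψ s (x s)` attains its maximum `0` at `t`, so its derivative
`∂ₜψ + ⟪∇ₓψ, f⟫ - ξ‖∇ₓψ‖² - ⟪∇ₓψ, w⟫` vanishes. As `⟪∇ₓψ, w⟫ ≥ 0`, this gives
`ξ η² ≤ ξ ‖∇ₓψ‖² ≤ |⟪∇ₓψ, f⟫| + |∂ₜψ| ≤ μ₀`. -/

theorem DifferentiableAt.hasDerivAt_comp_curve {E : Type*} [NormedAddCommGroup E]
    [InnerProductSpace ℝ E] [CompleteSpace E] {ψ : ℝ → E → ℝ} {x : ℝ → E} {t : ℝ} {v : E}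
    (hψ : DifferentiableAt ℝ (fun q : ℝ × E => ψ q.1 q.2) (t, x t)) (hx : HasDerivAt x v t) :
    HasDerivAt (fun s => ψ s (x s))
      (deriv (fun s => ψ s (x t)) t + ⟪gradient (ψ t) (x t), v⟫) t := by
  set D := fderiv ℝ (fun q : ℝ × E => ψ q.1 q.2) (t, x t)
  have hF : HasFDerivAt (fun q : ℝ × E => ψ q.1 q.2) D (t, x t) := hψ.hasFDerivAt
  have htime : HasDerivAt (fun s => ψ s (x t)) (D (1, 0)) t :=
    (hF.comp_hasDerivAt t ((hasDerivAt_id' t).prodMk (hasDerivAt_const t (x t))) :)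
  have hspace : HasFDerivAt (ψ t) (D.comp (.inr ℝ ℝ E)) (x t) :=
    hF.comp (x t) (hasFDerivAt_prodMk_right t (x t))
  have hsplit : D (1, v) = D (1, 0) + D (0, v) := by
    rw [← map_add, Prod.mk_add_mk, add_zero, zero_add]
  rw [htime.deriv, inner_gradient_left, hspace.fderiv, ContinuousLinearMap.comp_apply,
    ContinuousLinearMap.inr_apply, ← hsplit]
  exact (hF.comp_hasDerivAt t ((hasDerivAt_id' t).prodMk hx) :)

theorem mul_norm_sq_le_of_add_inner_eq_zero {E : Type*} [NormedAddCommGroup E]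
    [InnerProductSpace ℝ E] {g f w : E} {ξ a μ₀ : ℝ} (h : a + ⟪g, f - ξ • g - w⟫ = 0)
    (hw : 0 ≤ ⟪g, w⟫) (hμ : |⟪g, f⟫| + |a| ≤ μ₀) :
    ξ * ‖g‖ ^ 2 ≤ μ₀ := by
  rw [inner_sub_right, inner_sub_right, real_inner_smul_right, real_inner_self_eq_norm_sq] at h
  linarith [le_abs_self ⟪g, f⟫, le_abs_self a]

theorem le_div_sq_of_mul_sq_le {ξ μ₀ η r : ℝ} (hξ : 0 ≤ ξ) (hη : 0 < η) (hr : η ≤ r)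
    (h : ξ * r ^ 2 ≤ μ₀) : ξ ≤ μ₀ / η ^ 2 := by
  rw [le_div_iff₀ (by positivity)]
  calc ξ * η ^ 2 ≤ ξ * r ^ 2 := by gcongr
    _ ≤ μ₀ := h

theorem stmt6_general {n : ℕ} (ψ : ℝ → EuclideanSpace ℝ (Fin n) → ℝ)
    (hψ : ContDiff ℝ 1 (fun q : ℝ × EuclideanSpace ℝ (Fin n) => ψ q.1 q.2))
    (x : ℝ → EuclideanSpace ℝ (Fin n)) (t : ℝ)
    (f w : EuclideanSpace ℝ (Fin n)) (ξ μ₀ η : ℝ)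
    (hξ : 0 ≤ ξ) (hη : 0 < η)
    (hx : HasDerivAt x (f - ξ • gradient (ψ t) (x t) - w) t)
    (h0 : ψ t (x t) = 0)
    (hle : ∀ᶠ s in nhds t, ψ s (x s) ≤ 0)
    (hw : 0 ≤ ⟪gradient (ψ t) (x t), w⟫)
    (hμ : |⟪gradient (ψ t) (x t), f⟫| + |deriv (fun s => ψ s (x t)) t| ≤ μ₀)
    (hgr : η ≤ ‖gradient (ψ t) (x t)‖) :
    ξ ≤ μ₀ / η ^ 2 := by
  have hderiv := (hψ.differentiable one_ne_zero (t, x t)).hasDerivAt_comp_curve hx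
  have hmax : IsLocalMax (fun s => ψ s (x s)) t := by
    filter_upwards [hle] with s hs
    rwa [h0]
  exact le_div_sq_of_mul_sq_le hξ hη hgr
    (mul_norm_sq_le_of_add_inner_eq_zero (hmax.hasDerivAt_eq_zero hderiv) hw hμ)

/-- A priori bound on normal-cone multipliers: if ψ(·, x(·)) has a local maximum
value 0 at an interior time t, ẋ(t) = f - ξ∇ₓψ - w with ξ ≥ 0, ⟨∇ₓψ, w⟩ ≥ 0,
|⟨∇ₓψ, f⟩| + |∂ₜψ| ≤ μ₀ and |∇ₓψ| ≥ η > 0, then ξ ≤ μ₀/η². -/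
theorem stmt6 {n : ℕ} (T : ℝ) (ψ : ℝ → EuclideanSpace ℝ (Fin n) → ℝ)
    (hψ : ContDiff ℝ 1 (fun q : ℝ × EuclideanSpace ℝ (Fin n) => ψ q.1 q.2))
    (x : ℝ → EuclideanSpace ℝ (Fin n)) (t : ℝ) (ht : t ∈ Set.Ioo 0 T)
    (f w : EuclideanSpace ℝ (Fin n)) (ξ μ₀ η : ℝ)
    (hξ : 0 ≤ ξ) (hη : 0 < η)
    (hx : HasDerivAt x (f - ξ • gradient (ψ t) (x t) - w) t)
    (h0 : ψ t (x t) = 0)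
    (hle : ∀ᶠ s in nhds t, ψ s (x s) ≤ 0)
    (hw : 0 ≤ ⟪gradient (ψ t) (x t), w⟫)
    (hμ : |⟪gradient (ψ t) (x t), f⟫| + |deriv (fun s => ψ s (x t)) t| ≤ μ₀)
    (hgr : η ≤ ‖gradient (ψ t) (x t)‖) :
    ξ ≤ μ₀ / η ^ 2 :=
  stmt6_general ψ hψ x t f w ξ μ₀ η hξ hη hx h0 hle hw hμ hgr
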